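/- First discrete Frenet equation (inscribed case): for a discrete curve and every i ∈ ℤ, (DTᵉ)ᵢ = κᵢ • Nᵛᵢ, where κᵢ := ‖(DTᵉ)ᵢ‖. -/

import Mathlib

/-!
For odd `i` the midpoint condition at `i + 1` makes the two edges around `γ (i + 1)` equal, so
both sides vanish. For even `i` the binormal is constant on `{i, i + 1}`, hence
`N (i + 1) + N i = B i × (T (i + 1) + T i)`. With `B i` a positive multiple of `T i × T (i + 1)`,
the vector triple product expansion and `‖T‖ = 1` turn this into
`‖T i × T (i + 1)‖⁻¹ (1 + ⟪T i, T (i + 1)⟫) • (T (i + 1) - T i)`. Lagrange's identity makes the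
coefficient positive as soon as the cross product is nonzero, so `Nv i` is the unit vector along
`T (i + 1) - T i`.
-/

open RealInnerProductSpace

noncomputable section

/-- Points of a discrete curve live in `ℝ³` with the Euclidean norm. -/
abbrev E3 := EuclideanSpace ℝ (Fin 3)

/-- The cross product on `ℝ³`. -/
def cross3 (u v : E3) : E3 :=
  WithLp.toLp 2 ![u 1 * v 2 - u 2 * v 1, u 2 * v 0 - u 0 * v 2, u 0 * v 1 - u 1 * v 0]

section Normalize

variable {V : Type*} [NormedAddCommGroup V] [NormedSpace ℝ V]

lemma inv_norm_smul_pos_smul {c : ℝ} (hc : 0 < c) (w : V) :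
    ‖c • w‖⁻¹ • (c • w) = ‖w‖⁻¹ • w := by
  rw [norm_smul, Real.norm_of_nonneg hc.le, smul_smul, mul_inv_rev, mul_assoc,
    inv_mul_cancel₀ hc.ne', mul_one]

lemma norm_smul_inv_norm_smul (w : V) : ‖w‖ • ‖w‖⁻¹ • w = w := by
  rcases eq_or_ne w 0 with rfl | hw
  · simp
  · exact smul_inv_smul₀ (norm_ne_zero_iff.mpr hw) w

end Normalize

lemma sub_eq_sub_of_eq_midpoint {V : Type*} [AddCommGroup V] [Module ℝ V] {a b c : V}
    (h : b = (2 : ℝ)⁻¹ • (a + c)) : a - b = b - c := by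
  rw [h]; module

section Cross

open Matrix

lemma cross3_eq_toLp_crossProduct (u v : E3) :
    cross3 u v = WithLp.toLp 2 (WithLp.ofLp u ⨯₃ WithLp.ofLp v) := by
  rw [cross_apply]; rfl

lemma real_inner_eq_dotProduct (u v : E3) : ⟪u, v⟫ = WithLp.ofLp u ⬝ᵥ WithLp.ofLp v :=
  dotProduct_comm _ _

lemma cross3_add_right (u v w : E3) : cross3 u (v + w) = cross3 u v + cross3 u w := by
  simp [cross3_eq_toLp_crossProduct]

lemma cross3_smul_left (r : ℝ) (u v : E3) : cross3 (r • u) v = r • cross3 u v := by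
  simp [cross3_eq_toLp_crossProduct]

lemma cross3_cross3 (u v w : E3) : cross3 (cross3 u v) w = ⟪u, w⟫ • v - ⟪v, w⟫ • u := by
  simp [cross3_eq_toLp_crossProduct, real_inner_eq_dotProduct, cross_cross_eq_smul_sub_smul]

lemma norm_cross3_sq (u v : E3) : ‖cross3 u v‖ ^ 2 = ‖u‖ ^ 2 * ‖v‖ ^ 2 - ⟪u, v⟫ ^ 2 := by
  simp only [← real_inner_self_eq_norm_sq, real_inner_eq_dotProduct, cross3_eq_toLp_crossProduct,
    cross_dot_cross, dotProduct_comm (WithLp.ofLp v) (WithLp.ofLp u)]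
  ring

lemma abs_real_inner_lt_one_of_cross3_ne_zero {u v : E3} (hu : ‖u‖ = 1) (hv : ‖v‖ = 1)
    (h : cross3 u v ≠ 0) : |⟪u, v⟫| < 1 := by
  have hpos : 0 < ‖cross3 u v‖ ^ 2 := by positivity
  rw [norm_cross3_sq, hu, hv] at hpos
  exact abs_lt_of_sq_lt_sq (by linarith) zero_le_one

lemma cross3_cross3_add_of_norm_eq_one {u v : E3} (hu : ‖u‖ = 1) (hv : ‖v‖ = 1) :
    cross3 (cross3 u v) (v + u) = (1 + ⟪u, v⟫) • (v - u) := by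
  have huu : ⟪u, u⟫ = 1 := by rw [real_inner_self_eq_norm_sq, hu, one_pow]
  have hvv : ⟪v, v⟫ = 1 := by rw [real_inner_self_eq_norm_sq, hv, one_pow]
  rw [cross3_cross3, inner_add_right, inner_add_right, huu, hvv, real_inner_comm v u]
  module

end Cross

theorem first_discrete_frenet_equation_general
    (γ T N B : ℤ → E3)
    (hlen : ∀ i : ℤ, ‖γ (i + 1) - γ i‖ = 1)
    (hmid : ∀ i : ℤ, Even i → γ i = (2 : ℝ)⁻¹ • (γ (i + 1) + γ (i - 1)))
    (hT : ∀ i : ℤ, T i = γ (i + 1) - γ i)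
    (hcross : ∀ i : ℤ, Even i → cross3 (T i) (T (i + 1)) ≠ 0)
    (hBeven : ∀ i : ℤ, Even i →
      B i = ‖cross3 (T i) (T (i + 1))‖⁻¹ • cross3 (T i) (T (i + 1)))
    (hBodd : ∀ i : ℤ, Odd i → B i = B (i - 1))
    (hN : ∀ i : ℤ, N i = cross3 (B i) (T i))
    (Nv : ℤ → E3)
    (hNv : ∀ i : ℤ, Nv i = ‖N (i + 1) + N i‖⁻¹ • (N (i + 1) + N i))
    : ∀ i : ℤ, T (i + 1) - T i = ‖T (i + 1) - T i‖ • Nv i := by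
  intro i
  have hunit (j : ℤ) : ‖T j‖ = 1 := (hT j).symm ▸ hlen j
  rcases Int.even_or_odd i with he | ho
  · have hB : B (i + 1) = B i := by simpa using hBodd (i + 1) he.add_one
    set u := T i
    set v := T (i + 1)
    have hsum : N (i + 1) + N i = (‖cross3 u v‖⁻¹ * (1 + ⟪u, v⟫)) • (v - u) := by
      rw [hN, hN, hB, ← cross3_add_right, hBeven i he, cross3_smul_left,
        cross3_cross3_add_of_norm_eq_one (hunit i) (hunit (i + 1)), smul_smul]
    have hinner : |⟪u, v⟫| < 1 :=
      abs_real_inner_lt_one_of_cross3_ne_zero (hunit i) (hunit (i + 1)) (hcross i he)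
    have hc : 0 < ‖cross3 u v‖⁻¹ * (1 + ⟪u, v⟫) :=
      mul_pos (inv_pos.mpr (norm_pos_iff.mpr (hcross i he))) (by linarith [(abs_lt.mp hinner).1])
    rw [hNv, hsum, inv_norm_smul_pos_smul hc, norm_smul_inv_norm_smul]
  · have hedges := sub_eq_sub_of_eq_midpoint (hmid (i + 1) ho.add_one)
    rw [add_sub_cancel_right, ← hT, ← hT] at hedges
    rw [hedges, sub_self, norm_zero, zero_smul]

/-- First discrete Frenet equation (inscribed case): `(DTᵉ)ᵢ = κᵢ • Nᵛᵢ`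
with `κᵢ = ‖(DTᵉ)ᵢ‖`. -/
theorem first_discrete_frenet_equation
    (γ T N B : ℤ → E3)
    (hlen : ∀ i : ℤ, ‖γ (i + 1) - γ i‖ = 1)
    (hmid : ∀ i : ℤ, Even i → γ i = (2 : ℝ)⁻¹ • (γ (i + 1) + γ (i - 1)))
    (hT : ∀ i : ℤ, T i = γ (i + 1) - γ i)
    (hcross : ∀ i : ℤ, Even i → cross3 (T i) (T (i + 1)) ≠ 0)
    (hBeven : ∀ i : ℤ, Even i →
      B i = ‖cross3 (T i) (T (i + 1))‖⁻¹ • cross3 (T i) (T (i + 1)))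
    (hBodd : ∀ i : ℤ, Odd i → B i = B (i - 1))
    (hN : ∀ i : ℤ, N i = cross3 (B i) (T i))
    (Tv Nv Bv : ℤ → E3)
    (hMT : ∀ i : ℤ, T (i + 1) + T i ≠ 0)
    (hMN : ∀ i : ℤ, N (i + 1) + N i ≠ 0)
    (hMB : ∀ i : ℤ, B (i + 1) + B i ≠ 0)
    (hTv : ∀ i : ℤ, Tv i = ‖T (i + 1) + T i‖⁻¹ • (T (i + 1) + T i))
    (hNv : ∀ i : ℤ, Nv i = ‖N (i + 1) + N i‖⁻¹ • (N (i + 1) + N i))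
    (hBv : ∀ i : ℤ, Bv i = ‖B (i + 1) + B i‖⁻¹ • (B (i + 1) + B i))
    : ∀ i : ℤ, T (i + 1) - T i = ‖T (i + 1) - T i‖ • Nv i :=
  first_discrete_frenet_equation_general γ T N B hlen hmid hT hcross hBeven hBodd hN Nv hNv
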